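/- arXiv:0911.2743 — 9 statements merged into one kernel-verified Lean document; each statement's English description precedes it below -/
import Mathlib

section
/- Let L be a lattice and let a₁ ∈ L be lower-modular. Suppose a₂, e ∈ L satisfy e ∧ (a₁ ∨ a₂) ≤ a₁ and e ∨ a₂ ≤ e ∨ a₁. Then a₂ ≤ a₁. -/
def LowerModular {L : Type*} [Lattice L] (x : L) : Prop :=
  ∀ y z : L, x ≤ y → (z ⊔ x) ⊓ y = (z ⊓ y) ⊔ x

theorem stmt_1 {L : Type*} [Lattice L] (a₁ a₂ e : L)
    (h : LowerModular a₁) (hmeet : e ⊓ (a₁ ⊔ a₂) ≤ a₁)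
    (hjoin : e ⊔ a₂ ≤ e ⊔ a₁) : a₂ ≤ a₁ := by
  have key : (e ⊔ a₁) ⊓ (a₁ ⊔ a₂) = (e ⊓ (a₁ ⊔ a₂)) ⊔ a₁ :=
    h (a₁ ⊔ a₂) e le_sup_left
  have h1 : a₂ ≤ (e ⊔ a₁) ⊓ (a₁ ⊔ a₂) :=
    le_inf (le_trans le_sup_right hjoin) le_sup_right
  calc a₂ ≤ (e ⊓ (a₁ ⊔ a₂)) ⊔ a₁ := key ▸ h1
    _ ≤ a₁ := sup_le hmeet le_rfl
end

section
/- Let S be a set and π an equivalence relation on S. Then π has at most one equivalence class with more than one element if and only if π is an upper-modular element of the lattice of equivalence relations on S, i.e., for all equivalence relations ρ, σ on S with ρ ≤ π one has π ∧ (σ ∨ ρ) = (π ∧ σ) ∨ ρ. -/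
/-!
Let `N` be the union of the nonsingleton classes of `π`. If `N` lies in one class, then every
step of a `σ ⊔ ρ`-chain between distinct points is a `σ`-step or a `ρ`-step inside `N`. A chain
from `x` to `y` with `π x y` can then be cut at its first and last step inside `N`: the outer
segments are `σ`-steps between points of the class of `x`, i.e. `π ⊓ σ`-steps, and the middle
segment alternates `ρ`-steps with `σ`-segments joining two points of `N`, which are again
`π ⊓ σ`-steps. Conversely, if `a ≠ b` and `c ≠ d` lie in two different classes of `π`, take
`ρ` identifying only `a` and `b`, and `σ` with classes `{b, c}` and its complement: then
`c σ b ρ a σ d`, while `{c}` is a class of `π ⊓ σ ⊔ ρ`.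
-/

namespace Setoid

variable {S : Type*}

def nonsingleton (π : Setoid S) : Set S := {a | ∃ b, π a b ∧ a ≠ b}

def LinkedVia (π σ τ : Setoid S) (p q : S) : Prop :=
  σ p q ∨ ∃ u ∈ π.nonsingleton, ∃ v ∈ π.nonsingleton, σ p u ∧ τ u v ∧ σ v q

theorem equivalence_linkedVia {π σ τ : Setoid S}
    (hN : ∀ a ∈ π.nonsingleton, ∀ c ∈ π.nonsingleton, π a c) (hτ : π ⊓ σ ≤ τ) :
    Equivalence (LinkedVia π σ τ) where
  refl p := .inl (σ.refl p)
  symm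
    | .inl h => .inl (σ.symm h)
    | .inr ⟨u, hu, v, hv, hpu, huv, hvq⟩ =>
      .inr ⟨v, hv, u, hu, σ.symm hvq, τ.symm huv, σ.symm hpu⟩
  trans
    | .inl hpm, .inl hmq => .inl (σ.trans hpm hmq)
    | .inl hpm, .inr ⟨u, hu, v, hv, hmu, huv, hvq⟩ =>
      .inr ⟨u, hu, v, hv, σ.trans hpm hmu, huv, hvq⟩
    | .inr ⟨u, hu, v, hv, hpu, huv, hvm⟩, .inl hmq =>
      .inr ⟨u, hu, v, hv, hpu, huv, σ.trans hvm hmq⟩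
    | .inr ⟨u, hu, v, hv, hpu, huv, hvm⟩, .inr ⟨u', hu', v', hv', hmu', hu'v', hv'q⟩ =>
      have hvu' : τ v u' := hτ (inf_iff_and.mpr ⟨hN v hv u' hu', σ.trans hvm hmu'⟩)
      .inr ⟨u, hu, v', hv', hpu, τ.trans (τ.trans huv hvu') hu'v', hv'q⟩

theorem inf_sup_le_of_nonsingleton {π σ ρ : Setoid S}
    (hN : ∀ a ∈ π.nonsingleton, ∀ c ∈ π.nonsingleton, π a c) (hρ : ρ ≤ π) :
    π ⊓ (σ ⊔ ρ) ≤ π ⊓ σ ⊔ ρ := by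
  set τ := π ⊓ σ ⊔ ρ
  have hστ : π ⊓ σ ≤ τ := le_sup_left
  have hlinked : σ ⊔ ρ ≤ ⟨LinkedVia π σ τ, equivalence_linkedVia hN hστ⟩ := by
    refine sup_le (fun _ _ h => .inl h) fun p q hpq => ?_
    by_cases hpq' : p = q
    · exact hpq' ▸ .inl (σ.refl p)
    · have hp : p ∈ π.nonsingleton := ⟨q, hρ hpq, hpq'⟩
      have hq : q ∈ π.nonsingleton := ⟨p, π.symm (hρ hpq), Ne.symm hpq'⟩
      exact .inr ⟨p, hp, q, hq, σ.refl p, (le_sup_right : ρ ≤ τ) hpq, σ.refl q⟩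
  intro x y hxy
  obtain ⟨hπ, hσρ⟩ := inf_iff_and.mp hxy
  rcases hlinked hσρ with hσ | ⟨u, hu, v, hv, hxu, huv, hvy⟩
  · exact hστ (inf_iff_and.mpr ⟨hπ, hσ⟩)
  by_cases hxy' : x = y
  · exact hxy' ▸ τ.refl x
  have hx : x ∈ π.nonsingleton := ⟨y, hπ, hxy'⟩
  have hy : y ∈ π.nonsingleton := ⟨x, π.symm hπ, Ne.symm hxy'⟩
  have hτxu : τ x u := hστ (inf_iff_and.mpr ⟨hN x hx u hu, hxu⟩)
  have hτvy : τ v y := hστ (inf_iff_and.mpr ⟨hN v hv y hy, hvy⟩)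
  exact τ.trans (τ.trans hτxu huv) hτvy

theorem rel_of_inf_sup_le {π : Setoid S}
    (H : ∀ ρ σ : Setoid S, ρ ≤ π → π ⊓ (σ ⊔ ρ) ≤ π ⊓ σ ⊔ ρ)
    {a b c d : S} (hab : π a b) (hab' : a ≠ b) (hcd : π c d) (hcd' : c ≠ d) : π a c := by
  classical
  by_contra hac
  have hbc : ¬ π b c := fun h => hac (π.trans hab h)
  have hac' : a ≠ c := by rintro rfl; exact hac (π.refl a)
  have hbc' : b ≠ c := by rintro rfl; exact hbc (π.refl b)
  have hbd' : b ≠ d := by rintro rfl; exact hbc (π.symm hcd)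
  set ρ := ker fun x => if x = b then a else x
  set σ := ker fun x => x = b ∨ x = c
  have hρ : ρ ≤ π := by
    have h : ∀ x, π x (if x = b then a else x) := fun x => by
      split_ifs with hx
      · exact hx ▸ π.symm hab
      · exact π.refl x
    exact fun x y hxy => π.trans (h x) (ker_def.mp hxy ▸ π.symm (h y))
  have hcd_sup : (π ⊓ (σ ⊔ ρ)) c d := by
    refine inf_iff_and.mpr ⟨hcd, ?_⟩
    have hcb : σ c b := ker_def.mpr (by simp)
    have hba : ρ b a := ker_def.mpr (by simp [hab'])
    have had : σ a d := ker_def.mpr (by simp [hab', hac', hbd'.symm, hcd'.symm])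
    exact (σ ⊔ ρ).trans ((σ ⊔ ρ).trans ((le_sup_left : σ ≤ σ ⊔ ρ) hcb)
      ((le_sup_right : ρ ≤ σ ⊔ ρ) hba)) ((le_sup_left : σ ≤ σ ⊔ ρ) had)
  -- `c` is a singleton class of `π ⊓ σ ⊔ ρ`, but `c ≠ d`.
  have hc : π ⊓ σ ⊔ ρ ≤ ker (· = c) := by
    refine sup_le (fun x y hxy => ker_def.mpr ?_) (fun x y hxy => ker_def.mpr ?_)
    · obtain ⟨hπ, hσ⟩ := inf_iff_and.mp hxy
      have hxy' : x = b ∨ x = c ↔ y = b ∨ y = c := Iff.of_eq (ker_def.mp hσ)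
      refine propext ⟨?_, ?_⟩ <;> rintro rfl
      · rcases hxy'.mp (.inr rfl) with rfl | rfl
        · exact absurd (π.symm hπ) hbc
        · rfl
      · rcases hxy'.mpr (.inr rfl) with rfl | rfl
        · exact absurd hπ hbc
        · rfl
    · have hf : ∀ z, (if z = b then a else z) = c ↔ z = c := fun z => by
        split_ifs with hz <;> simp [hz, hac', hbc']
      exact propext ((hf x).symm.trans (ker_def.mp hxy ▸ hf y))
  exact hcd' (cast (ker_def.mp (hc (H ρ σ hρ hcd_sup))) rfl).symm

end Setoid

theorem stmt_2 {S : Type*} (π : Setoid S) :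
    (∀ a b c d : S, π.r a b → a ≠ b → π.r c d → c ≠ d → π.r a c) ↔
    (∀ ρ σ : Setoid S, ρ ≤ π → π ⊓ (σ ⊔ ρ) = (π ⊓ σ) ⊔ ρ) := by
  constructor
  · intro H ρ σ hρ
    have hN : ∀ a ∈ π.nonsingleton, ∀ c ∈ π.nonsingleton, π a c :=
      fun a ⟨b, hab, hab'⟩ c ⟨d, hcd, hcd'⟩ => H a b c d hab hab' hcd hcd'
    exact le_antisymm (Setoid.inf_sup_le_of_nonsingleton hN hρ)
      (sup_le (inf_le_inf_left π le_sup_left) (le_inf hρ le_sup_right))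
  · intro H a b c d hab hab' hcd hcd'
    exact Setoid.rel_of_inf_sup_le (fun ρ σ hρ => (H ρ σ hρ).le) hab hab' hcd hcd'
end

section
/- Let S be a set and π an equivalence relation on S having at most one non-singleton class. Then for any equivalence relations ρ, σ on S with ρ ≤ π, one has π ∧ (σ ∨ ρ) ≤ (π ∧ σ) ∨ ρ. -/
/-!
Let `C` be the non-singleton `π`-class and `τ = (π ⊓ σ) ⊔ ρ`. Since `ρ ≤ π` is trivial outside `C`,
a chain of `σ`- and `ρ`-steps can only leave and re-enter `C` through `σ`-steps, and two
`σ`-related points of `C` are `τ`-related. Formally: `σ ∘ τ ∘ σ` is an equivalence relation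
containing `σ` and `ρ`, and it agrees with `τ` on `π`-related pairs.
-/

namespace Setoid

variable {S : Type*}

def HasAtMostOneNontrivialClass (π : Setoid S) : Prop :=
  ∀ a b c d : S, π a b → a ≠ b → π c d → c ≠ d → π a c

def sandwichRel (σ τ : Setoid S) (u v : S) : Prop :=
  ∃ p q, σ u p ∧ τ p q ∧ σ q v

section

variable {π σ τ : Setoid S} (hπ : π.HasAtMostOneNontrivialClass) (hτπ : τ ≤ π)
  (hστ : π ⊓ σ ≤ τ)
include hπ hτπ hστ

theorem HasAtMostOneNontrivialClass.rel_of_rel_of_ne {a b c d : S} (hab : π a b) (hab' : a ≠ b)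
    (hcd : τ c d) (hcd' : c ≠ d) (hac : σ a c) : τ a c :=
  hστ ⟨hπ a b c d hab hab' (hτπ hcd) hcd', hac⟩

/-- A `τ`-step outside the non-singleton `π`-class is trivial, so it can be absorbed into the
adjacent `σ`-steps; inside that class the middle `σ`-step is a `τ`-step. -/
theorem HasAtMostOneNontrivialClass.sandwichRel_trans {u v w : S}
    (huv : sandwichRel σ τ u v) (hvw : sandwichRel σ τ v w) : sandwichRel σ τ u w := by
  obtain ⟨p, q, hup, hpq, hqv⟩ := huv
  obtain ⟨p', q', hvp', hp'q', hq'w⟩ := hvw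
  have hqp' : σ q p' := σ.trans' hqv hvp'
  by_cases hqp : q = p
  · subst hqp
    exact ⟨p', q', σ.trans' hup hqp', hp'q', hq'w⟩
  by_cases hpq' : p' = q'
  · subst hpq'
    exact ⟨p, q, hup, hpq, σ.trans' hqp' hq'w⟩
  have hτqp' := hπ.rel_of_rel_of_ne hτπ hστ (hτπ (τ.symm' hpq)) hqp hp'q' hpq' hqp'
  exact ⟨p, q', hup, τ.trans' hpq (τ.trans' hτqp' hp'q'), hq'w⟩

theorem HasAtMostOneNontrivialClass.sandwichRel_equivalence :
    Equivalence (sandwichRel σ τ) where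
  refl u := ⟨u, u, σ.refl' u, τ.refl' u, σ.refl' u⟩
  symm := fun ⟨p, q, hup, hpq, hqv⟩ => ⟨q, p, σ.symm' hqv, τ.symm' hpq, σ.symm' hup⟩
  trans := hπ.sandwichRel_trans hτπ hστ

theorem HasAtMostOneNontrivialClass.rel_of_sandwichRel {x y : S} (hxy : π x y)
    (h : sandwichRel σ τ x y) : τ x y := by
  obtain ⟨p, q, hxp, hpq, hqy⟩ := h
  by_cases hxy' : x = y
  · exact hxy' ▸ τ.refl' x
  by_cases hpq' : p = q
  · subst hpq'
    exact hστ ⟨hxy, σ.trans' hxp hqy⟩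
  have hτxp := hπ.rel_of_rel_of_ne hτπ hστ hxy hxy' hpq hpq' hxp
  have hτyq := hπ.rel_of_rel_of_ne hτπ hστ (π.symm' hxy) (Ne.symm hxy') (τ.symm' hpq)
    (Ne.symm hpq') (σ.symm' hqy)
  exact τ.trans' hτxp (τ.trans' hpq (τ.symm' hτyq))

end

end Setoid

theorem stmt_3 {S : Type*} (π : Setoid S)
    (h : ∀ a b c d : S, π.r a b → a ≠ b → π.r c d → c ≠ d → π.r a c)
    (ρ σ : Setoid S) (hρ : ρ ≤ π) :
    π ⊓ (σ ⊔ ρ) ≤ (π ⊓ σ) ⊔ ρ := by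
  have hπ : π.HasAtMostOneNontrivialClass := h
  set τ := (π ⊓ σ) ⊔ ρ
  have hτπ : τ ≤ π := sup_le inf_le_left hρ
  have hστ : π ⊓ σ ≤ τ := le_sup_left
  let R : Setoid S := ⟨_, hπ.sandwichRel_equivalence hτπ hστ⟩
  have hσR : σ ≤ R := fun u v huv => ⟨v, v, huv, τ.refl' v, σ.refl' v⟩
  have hρR : ρ ≤ R := fun u v huv => ⟨u, v, σ.refl' u, le_sup_right (a := π ⊓ σ) huv, σ.refl' v⟩
  intro x y hxy
  exact hπ.rel_of_sandwichRel hτπ hστ hxy.1 (sup_le hσR hρR hxy.2)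
end

section
/- Let S be a set and π an equivalence relation on S which has two distinct non-singleton classes. Then π is not an upper-modular element of the lattice of equivalence relations on S: there exist equivalence relations ρ, σ with ρ ≤ π and π ∧ (σ ∨ ρ) ≠ (π ∧ σ) ∨ ρ. -/
/-!
Take `a π b`, `c π d` in two different classes with `a ≠ b`, `c ≠ d`. Let `ρ` merge only `b` into
`a`, and `σ` merge only `c` into `a` and `d` into `b`. The chain `c σ a ρ b σ d` shows
`(c, d) ∈ π ∧ (σ ∨ ρ)`. Every pair `σ` merges straddles two `π`-classes, so `π ∧ σ` is trivial and
`(π ∧ σ) ∨ ρ = ρ`, which does not relate `c` and `d`.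
-/

namespace Setoid

variable {S : Type*}

theorem ker_le_of_rel_apply {π : Setoid S} {f : S → S} (h : ∀ x, π x (f x)) : ker f ≤ π :=
  fun x y hxy => π.trans (h x) (ker_def.mp hxy ▸ π.symm (h y))

theorem ker_update_id_le [DecidableEq S] {π : Setoid S} {a b : S} (hab : π a b) :
    ker (Function.update id b a) ≤ π :=
  ker_le_of_rel_apply fun x => by
    by_cases hx : x = b
    · subst hx
      simpa using π.symm hab
    · simp [hx]

theorem inf_ker_update_update_eq_bot [DecidableEq S] {π : Setoid S} {a b c d : S}
    (hab : π a b) (hne : a ≠ b) (hcd : π c d) (hac : ¬ π a c) :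
    π ⊓ ker (Function.update (Function.update id c a) d b) = ⊥ := by
  refine eq_bot_iff.2 fun x y hxy => show x = y from ?_
  obtain ⟨hπ, hg⟩ := inf_iff_and.mp hxy
  rw [← Quotient.eq (r := π)] at hab hcd hac hπ
  simp only [ker_def, Function.update_apply, id] at hg
  split_ifs at hg <;> grind

theorem inf_sup_ne_of_chain {π ρ σ : Setoid S} {a b c d : S} (hab : ρ a b) (hca : σ c a)
    (hbd : σ b d) (hcd : π c d) (hπσ : π ⊓ σ ≤ ρ) (hρcd : ¬ ρ c d) :
    π ⊓ (σ ⊔ ρ) ≠ π ⊓ σ ⊔ ρ := by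
  intro heq
  have hleft : (π ⊓ (σ ⊔ ρ)) c d :=
    ⟨hcd, (σ ⊔ ρ).trans (le_sup_left (b := ρ) hca)
      ((σ ⊔ ρ).trans (le_sup_right (a := σ) hab) (le_sup_left (b := ρ) hbd))⟩
  exact hρcd (sup_le hπσ le_rfl (heq ▸ hleft))

end Setoid

open Setoid

theorem stmt_4 {S : Type*} (π : Setoid S)
    (h : ∃ a b c d : S, π.r a b ∧ a ≠ b ∧ π.r c d ∧ c ≠ d ∧ ¬ π.r a c) :
    ∃ ρ σ : Setoid S, ρ ≤ π ∧ π ⊓ (σ ⊔ ρ) ≠ (π ⊓ σ) ⊔ ρ := by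
  classical
  obtain ⟨a, b, c, d, hab, hneab, hcd, hnecd, hnac⟩ := h
  have hac : a ≠ c := fun h => hnac (h ▸ π.refl a)
  have hbc : b ≠ c := fun h => hnac (h ▸ hab)
  have had : a ≠ d := fun h => hnac (h ▸ π.symm hcd)
  have hbd : b ≠ d := fun h => hnac (π.trans hab (h ▸ π.symm hcd))
  refine ⟨ker (Function.update id b a), ker (Function.update (Function.update id c a) d b),
    ker_update_id_le hab, inf_sup_ne_of_chain (a := a) (b := b) ?_ ?_ ?_ hcd ?_ ?_⟩
  · simp [ker_def, hneab]
  · simp [ker_def, hac, hnecd, had]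
  · simp [ker_def, hbc, hbd]
  · exact (inf_ker_update_update_eq_bot hab hneab hcd hnac).le.trans bot_le
  · simp [ker_def, hbc.symm, hbd.symm, hnecd]
end

section
/- Let L be a lattice, e ∈ L, and let (c_ξ)_{ξ ∈ ℝ} be a family of lower-modular elements of L indexed by the reals such that ξ ≤ η implies c_ξ ≤ c_η, ξ < η implies c_ξ ≠ c_η, and e ∧ c_η ≤ c_ξ for all ξ ≤ η. Then the map ξ ↦ e ∨ c_ξ is strictly monotone, i.e., ξ < η implies e ∨ c_ξ < e ∨ c_η. In particular {e ∨ c_ξ : ξ ∈ ℝ} is a chain in L order-isomorphic to ℝ. -/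
theorem stmt_6 {L : Type*} [Lattice L] (e : L) (c : ℝ → L)
    (hlm : ∀ ξ : ℝ, LowerModular (c ξ))
    (hmono : ∀ ξ η : ℝ, ξ ≤ η → c ξ ≤ c η)
    (hne : ∀ ξ η : ℝ, ξ < η → c ξ ≠ c η)
    (hmeet : ∀ ξ η : ℝ, ξ ≤ η → e ⊓ c η ≤ c ξ) :
    StrictMono (fun ξ : ℝ => e ⊔ c ξ) := by
  intro ξ η hlt
  have hle : c ξ ≤ c η := hmono ξ η hlt.le
  have h1 : e ⊔ c ξ ≤ e ⊔ c η := sup_le_sup_left hle e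
  refine lt_of_le_of_ne h1 (fun heq => ?_)
  have key : (e ⊔ c ξ) ⊓ c η = (e ⊓ c η) ⊔ c ξ := hlm ξ (c η) e hle
  have h2 : (e ⊓ c η) ⊔ c ξ = c ξ := sup_eq_right.mpr (hmeet ξ η hlt.le)
  have h3 : (e ⊔ c ξ) ⊓ c η = c η := by
    rw [show e ⊔ c ξ = e ⊔ c η from heq]; exact inf_eq_right.mpr le_sup_right
  exact hne ξ η hlt (by rw [← h2, ← key, h3])
end

section
/- Let L be a lattice, e ∈ L, and let a₁, a₂ ∈ L be lower-modular elements that are incomparable (a₁ ≰ a₂ and a₂ ≰ a₁), and suppose e ∧ (a₁ ∨ a₂) ≤ a₁ ∧ a₂. Then e ∨ a₁ and e ∨ a₂ are incomparable. -/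
theorem stmt_7 {L : Type*} [Lattice L] (e a₁ a₂ : L)
    (h1 : LowerModular a₁) (h2 : LowerModular a₂)
    (hinc : ¬ a₁ ≤ a₂ ∧ ¬ a₂ ≤ a₁)
    (hmeet : e ⊓ (a₁ ⊔ a₂) ≤ a₁ ⊓ a₂) :
    ¬ e ⊔ a₁ ≤ e ⊔ a₂ ∧ ¬ e ⊔ a₂ ≤ e ⊔ a₁ := by
  constructor
  · intro h
    apply hinc.1
    have key : (e ⊔ a₂) ⊓ (a₁ ⊔ a₂) = (e ⊓ (a₁ ⊔ a₂)) ⊔ a₂ := h2 _ e le_sup_right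
    have : a₁ ≤ (e ⊔ a₂) ⊓ (a₁ ⊔ a₂) :=
      le_inf (le_trans (le_trans le_sup_right h) le_rfl) le_sup_left
    calc a₁ ≤ (e ⊓ (a₁ ⊔ a₂)) ⊔ a₂ := key ▸ this
      _ ≤ (a₁ ⊓ a₂) ⊔ a₂ := sup_le_sup_right hmeet _
      _ ≤ a₂ := sup_le inf_le_right le_rfl
  · intro h
    apply hinc.2
    have key : (e ⊔ a₁) ⊓ (a₁ ⊔ a₂) = (e ⊓ (a₁ ⊔ a₂)) ⊔ a₁ := h1 _ e le_sup_left
    have : a₂ ≤ (e ⊔ a₁) ⊓ (a₁ ⊔ a₂) :=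
      le_inf (le_trans le_sup_right h) le_sup_right
    calc a₂ ≤ (e ⊓ (a₁ ⊔ a₂)) ⊔ a₁ := key ▸ this
      _ ≤ (a₁ ⊓ a₂) ⊔ a₁ := sup_le_sup_right hmeet _
      _ ≤ a₁ := sup_le inf_le_left le_rfl
end

section
/- Let L be a lattice, e ∈ L, and let (a_ξ)_{ξ ∈ ℝ} be a family of pairwise incomparable lower-modular elements of L such that e ∧ (a_ξ ∨ a_η) ≤ a_ξ ∧ a_η for all ξ ≠ η. Then the elements e ∨ a_ξ, ξ ∈ ℝ, form an anti-chain of cardinality continuum in L (they are pairwise incomparable and pairwise distinct). -/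
theorem stmt_8 {L : Type*} [Lattice L] (e : L) (a : ℝ → L)
    (hlm : ∀ ξ : ℝ, LowerModular (a ξ))
    (hinc : ∀ ξ η : ℝ, ξ ≠ η → ¬ a ξ ≤ a η)
    (hmeet : ∀ ξ η : ℝ, ξ ≠ η → e ⊓ (a ξ ⊔ a η) ≤ a ξ ⊓ a η) :
    (∀ ξ η : ℝ, ξ ≠ η → ¬ e ⊔ a ξ ≤ e ⊔ a η) ∧
      Function.Injective (fun ξ : ℝ => e ⊔ a ξ) := by
  have key : ∀ ξ η : ℝ, ξ ≠ η → ¬ e ⊔ a ξ ≤ e ⊔ a η := by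
    intro ξ η hne h
    apply hinc ξ η hne
    have h1 : a ξ ≤ e ⊔ a η := le_trans le_sup_right h
    have h2 : (e ⊔ a η) ⊓ (a ξ ⊔ a η) = (e ⊓ (a ξ ⊔ a η)) ⊔ a η :=
      hlm η (a ξ ⊔ a η) e le_sup_right
    have h3 : (e ⊔ a η) ⊓ (a ξ ⊔ a η) ≤ a η := by
      rw [h2]
      exact sup_le (le_trans (hmeet ξ η hne) inf_le_right) le_rfl
    exact le_trans (le_inf h1 le_sup_left) h3
  refine ⟨key, fun ξ η h => ?_⟩
  by_contra hne
  exact key ξ η hne (le_of_eq h)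
end

section
/- Let L be the lattice of equivalence relations on a set S, and let x ∈ L be the equivalence relation whose only non-singleton class is a fixed subset A ⊆ S (elements of A are all related; every element outside A related only to itself). Then for any y, z ∈ L with y ≤ x: x ∧ (z ∨ y) = (x ∧ z) ∨ y. -/
/-- The equivalence relation on `S` whose only (possibly) non-singleton class is `A`. -/
def piA {S : Type*} (A : Set S) : Setoid S :=
  ⟨fun a b => a = b ∨ (a ∈ A ∧ b ∈ A),
   ⟨fun _ => Or.inl rfl,
    fun h => by rcases h with h | ⟨h1, h2⟩; exact Or.inl h.symm; exact Or.inr ⟨h2, h1⟩,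
    fun h h' => by
      rcases h with h | ⟨h1, h2⟩
      · rwa [h]
      · rcases h' with h' | ⟨h3, h4⟩
        · exact Or.inr ⟨h1, h' ▸ h2⟩
        · exact Or.inr ⟨h1, h4⟩⟩⟩

theorem stmt_17 {S : Type*} (A : Set S) (y z : Setoid S) (hy : y ≤ piA A) :
    piA A ⊓ (z ⊔ y) = (piA A ⊓ z) ⊔ y := by
  set r : Setoid S := (piA A ⊓ z) ⊔ y with hr
  apply le_antisymm
  · -- main direction
    rw [Setoid.le_def]
    intro a b hab
    obtain ⟨hx, hzy⟩ := Setoid.inf_iff_and.mp hab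
    rw [Setoid.sup_eq_eqvGen] at hzy
    replace hzy : Relation.EqvGen (fun u v => z u v ∨ y u v) a b := hzy
    -- invariant Q
    have key : ∀ a b, Relation.EqvGen (fun u v => z u v ∨ y u v) a b →
        z a b ∨ ∃ a' b', a' ∈ A ∧ b' ∈ A ∧ z a a' ∧ r a' b' ∧ z b' b := by
      intro a b h
      induction h with
      | rel u v huv =>
        rcases huv with h | h
        · exact Or.inl h
        · rcases Setoid.le_def.mp hy h with heq | ⟨hu, hv⟩
          · exact Or.inl (heq ▸ z.refl u)
          · exact Or.inr ⟨u, v, hu, hv, z.refl u, Setoid.le_def.mp le_sup_right h, z.refl v⟩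
      | refl u => exact Or.inl (z.refl u)
      | symm u v _ ih =>
        rcases ih with h | ⟨a', b', ha', hb', h1, h2, h3⟩
        · exact Or.inl (z.symm h)
        · exact Or.inr ⟨b', a', hb', ha', z.symm h3, r.symm h2, z.symm h1⟩
      | trans u v w _ _ ih1 ih2 =>
        rcases ih1 with h1 | ⟨a', b', ha', hb', p1, p2, p3⟩
        · rcases ih2 with h2 | ⟨c', d', hc', hd', q1, q2, q3⟩
          · exact Or.inl (z.trans h1 h2)
          · exact Or.inr ⟨c', d', hc', hd', z.trans h1 q1, q2, q3⟩
        · rcases ih2 with h2 | ⟨c', d', hc', hd', q1, q2, q3⟩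
          · exact Or.inr ⟨a', b', ha', hb', p1, p2, z.trans p3 h2⟩
          · refine Or.inr ⟨a', d', ha', hd', p1, ?_, q3⟩
            have hmid : r b' c' := Setoid.le_def.mp le_sup_left
              (Setoid.inf_iff_and.mpr ⟨Or.inr ⟨hb', hc'⟩, z.trans p3 q1⟩)
            exact r.trans p2 (r.trans hmid q2)
    rcases key a b hzy with h | ⟨a', b', ha', hb', h1, h2, h3⟩
    · rcases hx with heq | ⟨ha, hb⟩
      · exact heq ▸ r.refl a
      · exact Setoid.le_def.mp le_sup_left (Setoid.inf_iff_and.mpr ⟨Or.inr ⟨ha, hb⟩, h⟩)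
    · rcases hx with heq | ⟨ha, hb⟩
      · subst heq
        -- a = b; show r a a
        exact r.refl a
      · have h1' : r a a' := Setoid.le_def.mp le_sup_left
          (Setoid.inf_iff_and.mpr ⟨Or.inr ⟨ha, ha'⟩, h1⟩)
        have h3' : r b' b := Setoid.le_def.mp le_sup_left
          (Setoid.inf_iff_and.mpr ⟨Or.inr ⟨hb', hb⟩, h3⟩)
        exact r.trans h1' (r.trans h2 h3')
  · exact sup_le (inf_le_inf_left _ le_sup_left) (le_inf hy le_sup_right)
end

section
/- Let L be a complete lattice, e ∈ L, and f : ℝ → L defined by f(ξ) = e ∨ c_ξ where (c_ξ) is a strictly increasing family of lower-modular elements with e ∧ c_η ≤ c_ξ whenever ξ ≤ η. Then f is injective. -/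
lemma aux_18 {L : Type*} [CompleteLattice L] (e : L) (c : ℝ → L)
    (hlm : ∀ ξ : ℝ, LowerModular (c ξ))
    (hmono : StrictMono c)
    (hmeet : ∀ ξ η : ℝ, ξ ≤ η → e ⊓ c η ≤ c ξ)
    {ξ η : ℝ} (hlt : ξ < η) (h : e ⊔ c ξ = e ⊔ c η) : False := by
  have key := hlm ξ (c η) e (hmono hlt).le
  have h1 : (e ⊔ c ξ) ⊓ c η = c η := by
    rw [h]; exact inf_eq_right.mpr le_sup_right
  have h2 : (e ⊓ c η) ⊔ c ξ = c ξ := sup_eq_right.mpr (hmeet ξ η hlt.le)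
  rw [h1, h2] at key
  exact absurd key.symm (hmono hlt).ne

theorem stmt_18 {L : Type*} [CompleteLattice L] (e : L) (c : ℝ → L)
    (hlm : ∀ ξ : ℝ, LowerModular (c ξ))
    (hmono : StrictMono c)
    (hmeet : ∀ ξ η : ℝ, ξ ≤ η → e ⊓ c η ≤ c ξ) :
    Function.Injective (fun ξ : ℝ => e ⊔ c ξ) := by
  intro ξ η h
  simp only at h
  rcases lt_trichotomy ξ η with hlt | heq | hlt
  · exact absurd h (fun h => aux_18 e c hlm hmono hmeet hlt h)
  · exact heq
  · exact absurd h.symm (fun h => aux_18 e c hlm hmono hmeet hlt h)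
end
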